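/- The projection Φ₃,₂ : BS(3,2) → ℝ² maps the element h = b a b⁻¹ a² b a⁻¹ b⁻¹ a⁻² to (0,0); consequently Φ₃,₂ is not injective. -/

import Mathlib

inductive Letter : Type
  | a | b | ainv | binv
deriving DecidableEq

def bExp (w : List Letter) : ℤ := (w.count Letter.b : ℤ) - (w.count Letter.binv : ℤ)

def binvExp (w : List Letter) : ℤ := (w.count Letter.binv : ℤ) - (w.count Letter.b : ℤ)

noncomputable def psiAux (m n : ℕ) : List Letter → ℝ
  | [] => 0
  | x :: w =>
    match x with
    | Letter.a    => psiAux m n w + ((m : ℝ) / n) ^ (bExp w.reverse)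
    | Letter.ainv => psiAux m n w - ((m : ℝ) / n) ^ (bExp w.reverse)
    | _           => psiAux m n w

noncomputable def psi (m n : ℕ) (w : List Letter) : ℝ := psiAux m n w.reverse

inductive Gen : Type
  | a | b
deriving DecidableEq

/-- The Baumslag–Solitar group BS(m,n) = ⟨a, b | aᵐ b = b aⁿ⟩. -/
abbrev BS (m n : ℕ) : Type :=
  PresentedGroup
    ({FreeGroup.of Gen.a ^ m * FreeGroup.of Gen.b * (FreeGroup.of Gen.a ^ n)⁻¹ *
        (FreeGroup.of Gen.b)⁻¹} : Set (FreeGroup Gen))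

def Letter.toBS (m n : ℕ) : Letter → BS m n
  | Letter.a    => PresentedGroup.of Gen.a
  | Letter.b    => PresentedGroup.of Gen.b
  | Letter.ainv => (PresentedGroup.of Gen.a)⁻¹
  | Letter.binv => (PresentedGroup.of Gen.b)⁻¹

def wordToBS (m n : ℕ) (w : List Letter) : BS m n := (w.map (Letter.toBS m n)).prod

/-- The word ω = b a b⁻¹ a² b a⁻¹ b⁻¹ a⁻². -/
def omegaWord : List Letter :=
  [Letter.b, Letter.a, Letter.binv, Letter.a, Letter.a, Letter.b,
   Letter.ainv, Letter.binv, Letter.ainv, Letter.ainv]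

/-!
The map `a ↦ a`, `b ↦ t` sends `BS(m, n)` to the HNN extension of `ℤ = ⟨a⟩` that conjugates
`nℤ` onto `mℤ` by `t aⁿ t⁻¹ = aᵐ`. For `m > 2`, `n > 1` the image
`t a t⁻¹ a² t a⁻¹ t⁻¹ a⁻²` of `ω` contains no pinch `t g t⁻¹` with `g ∈ nℤ` nor `t⁻¹ g t` with
`g ∈ mℤ`, so by Britton's lemma it is not in `⟨a⟩`; in particular `ω ≠ 1`. On the other hand
`ω` has total `b`-exponent `0` and, evaluating `ψ` letter by letter,
`ψ(ω) = 3/2 + 1 + 1 - 3/2 - 1 - 1 = 0`, so `Φ₃,₂(ω) = Φ₃,₂(1)`.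
-/

open Multiplicative Subgroup HNNExtension HNNExtension.NormalWord

lemma mem_zpowers_ofAdd_iff {n : ℤ} {x : Multiplicative ℤ} :
    x ∈ zpowers (ofAdd n) ↔ n ∣ x.toAdd := by
  simp [Subgroup.mem_zpowers_iff, dvd_def, ← toAdd.injective.eq_iff, mul_comm, eq_comm]

def zpowersScaleEquiv (m n : ℤ) [NeZero m] [NeZero n] :
    zpowers (ofAdd n) ≃* zpowers (ofAdd m) where
  toFun x := ⟨ofAdd (m * ((x : Multiplicative ℤ).toAdd / n)),
    mem_zpowers_ofAdd_iff.2 (dvd_mul_right _ _)⟩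
  invFun y := ⟨ofAdd (n * ((y : Multiplicative ℤ).toAdd / m)),
    mem_zpowers_ofAdd_iff.2 (dvd_mul_right _ _)⟩
  left_inv := by
    rintro ⟨x, hx⟩
    obtain ⟨k, hk⟩ := mem_zpowers_ofAdd_iff.1 hx
    ext
    simp [hk, NeZero.ne, mul_comm]
  right_inv := by
    rintro ⟨y, hy⟩
    obtain ⟨k, hk⟩ := mem_zpowers_ofAdd_iff.1 hy
    ext
    simp [hk, NeZero.ne, mul_comm]
  map_mul' := by
    rintro ⟨x, hx⟩ ⟨y, hy⟩
    obtain ⟨k, hk⟩ := mem_zpowers_ofAdd_iff.1 hx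
    obtain ⟨l, hl⟩ := mem_zpowers_ofAdd_iff.1 hy
    ext
    simp [hk, hl, ← mul_add, NeZero.ne, add_mul]

lemma zpowersScaleEquiv_ofAdd_self (m n : ℤ) [NeZero m] [NeZero n] :
    zpowersScaleEquiv m n ⟨ofAdd n, mem_zpowers _⟩ = ⟨ofAdd m, mem_zpowers _⟩ := by
  ext
  simp [zpowersScaleEquiv, NeZero.ne]

namespace BaumslagSolitar

abbrev HNN (m n : ℕ) [NeZero m] [NeZero n] : Type :=
  HNNExtension (Multiplicative ℤ) (zpowers (ofAdd (n : ℤ))) (zpowers (ofAdd (m : ℤ)))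
    (zpowersScaleEquiv m n)

section

variable {m n : ℕ} [NeZero m] [NeZero n]

lemma of_ofAdd_natCast (k : ℕ) : (of (ofAdd (k : ℤ)) : HNN m n) = of (ofAdd 1) ^ k := by
  rw [← map_pow, ← ofAdd_nsmul, nsmul_one]

lemma lift_rels_eq_one :
    ∀ r ∈ ({FreeGroup.of Gen.a ^ m * FreeGroup.of Gen.b * (FreeGroup.of Gen.a ^ n)⁻¹ *
        (FreeGroup.of Gen.b)⁻¹} : Set (FreeGroup Gen)),
      FreeGroup.lift (fun | Gen.a => of (ofAdd 1) | Gen.b => t : Gen → HNN m n) r = 1 := by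
  rintro r rfl
  have conj : t * (of (ofAdd (n : ℤ)) : HNN m n) = of (ofAdd (m : ℤ)) * t := by
    simpa [zpowersScaleEquiv_ofAdd_self] using
      t_mul_of (φ := zpowersScaleEquiv m n) ⟨_, mem_zpowers _⟩
  simp only [map_mul, map_inv, map_pow, FreeGroup.lift_apply_of, ← of_ofAdd_natCast, ← conj]
  group

def toHNN : BS m n →* HNN m n := PresentedGroup.toGroup lift_rels_eq_one

lemma toHNN_wordToBS_omegaWord :
    toHNN (wordToBS m n omegaWord) =
      t * of (ofAdd 1) * t⁻¹ * of (ofAdd 1) ^ 2 * t * (of (ofAdd 1))⁻¹ * t⁻¹ *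
        (of (ofAdd 1) ^ 2)⁻¹ := by
  simp only [wordToBS, omegaWord, Letter.toBS, List.map_cons, List.map_nil, List.prod_cons,
    List.prod_nil, map_mul, map_inv, mul_one, toHNN, PresentedGroup.toGroup.of, sq, mul_inv_rev,
    mul_assoc]

end

theorem wordToBS_omegaWord_ne_one {m n : ℕ} (hm : 2 < m) (hn : 1 < n) :
    wordToBS m n omegaWord ≠ 1 := by
  have : NeZero m := ⟨by omega⟩
  have : NeZero n := ⟨by omega⟩
  have hn1 : ¬ (n : ℤ) ∣ 1 := by exact_mod_cast Nat.not_dvd_of_pos_of_lt one_pos hn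
  have hm2 : ¬ (m : ℤ) ∣ 2 := by exact_mod_cast Nat.not_dvd_of_pos_of_lt two_pos hm
  let w : ReducedWord (Multiplicative ℤ) (zpowers (ofAdd (n : ℤ))) (zpowers (ofAdd (m : ℤ))) :=
    ⟨1, [(1, ofAdd 1), (-1, ofAdd 1 ^ 2), (1, (ofAdd 1)⁻¹), (-1, (ofAdd 1 ^ 2)⁻¹)], by
      simp [List.isChain_cons_cons, toSubgroup_one, toSubgroup_neg_one, mem_zpowers_ofAdd_iff,
        hn1, hm2]⟩
  have hw : w.prod (zpowersScaleEquiv m n) = toHNN (wordToBS m n omegaWord) := by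
    rw [toHNN_wordToBS_omegaWord]
    simp [w, ReducedWord.prod, mul_assoc]
  intro h
  simpa [w] using ReducedWord.toList_eq_nil_of_mem_of_range _ w (by
    rw [hw, h, map_one]; exact one_mem _)

end BaumslagSolitar

lemma psi_omegaWord : psi 3 2 omegaWord = 0 := by
  simp [psi, psiAux, omegaWord, bExp]
  ring

theorem phi_omega_zero_and_not_injective :
    psi 3 2 omegaWord = 0 ∧ binvExp omegaWord = 0 ∧ wordToBS 3 2 omegaWord ≠ 1 ∧
    ∀ Φ : BS 3 2 → ℝ × ℤ,
      (∀ w : List Letter, Φ (wordToBS 3 2 w) = (psi 3 2 w, binvExp w)) →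
      ¬ Function.Injective Φ := by
  have hbinv : binvExp omegaWord = 0 := by decide
  have hne : wordToBS 3 2 omegaWord ≠ 1 :=
    BaumslagSolitar.wordToBS_omegaWord_ne_one (by norm_num) (by norm_num)
  refine ⟨psi_omegaWord, hbinv, hne, fun Φ hΦ hinj => hne (hinj ?_)⟩
  rw [hΦ omegaWord, psi_omegaWord, hbinv]
  exact (hΦ []).symm
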